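/- Let each fᵢ: ℝ^d → ℝ be differentiable, convex and Lᵢ-smooth, assume the interpolation regime holds with common minimizer x⋆, and let γ > 0. Then for each i and all x ∈ ℝ^d: M_{fᵢ}^γ(x) − M_{fᵢ}^γ(x⋆) ≥ (1/(1+γLᵢ)) (fᵢ(x) − fᵢ(x⋆)). -/

import Mathlib

/-!
Convexity and `∇f(x⋆) = 0` make `x⋆` a global minimizer, so `M(x⋆) = f(x⋆)`. For any `z`, the
descent lemma gives `f(x) ≤ f(z) + ‖∇f(z)‖ ‖z - x‖ + (L/2) ‖z - x‖²`, a gradient step from `z`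
gives `‖∇f(z)‖² ≤ 2L (f(z) - f(x⋆))`, and AM-GM with weight `γ` combines the two into
`f(x) - f(x⋆) ≤ (1 + γL) (f(z) - f(x⋆) + ‖z - x‖² / (2γ))`. Take the infimum over `z`.
-/

/-- The Moreau envelope of a real-valued function `f` with parameter `γ`. -/
noncomputable def moreau {d : ℕ} (γ : ℝ) (f : EuclideanSpace ℝ (Fin d) → ℝ)
    (x : EuclideanSpace ℝ (Fin d)) : ℝ :=
  ⨅ z, (f z + (1 / (2 * γ)) * ‖z - x‖ ^ 2)

open Set AffineMap

section Smooth

variable {F : Type*} [NormedAddCommGroup F] [InnerProductSpace ℝ F] [CompleteSpace F]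
  {f : F → ℝ} {g : F → F} {L : ℝ}

theorem HasGradientAt.hasDerivAt_comp_lineMap {x y g' : F} {t : ℝ}
    (hf : HasGradientAt f g' (lineMap x y t)) :
    HasDerivAt (f ∘ lineMap x y) (inner ℝ g' (y - x)) t := by
  simpa using (hasGradientAt_iff_hasFDerivAt.mp hf).comp_hasDerivAt t hasDerivAt_lineMap

theorem ConvexOn.add_inner_le {x g' : F} (hconv : ConvexOn ℝ univ f) (hf : HasGradientAt f g' x)
    (y : F) : f x + inner ℝ g' (y - x) ≤ f y := by
  have hline : ConvexOn ℝ univ (f ∘ lineMap x y) := hconv.comp_affineMap (lineMap x y)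
  have h := hline.le_slope_of_hasDerivAt (mem_univ 0) (mem_univ 1) zero_lt_one
    (HasGradientAt.hasDerivAt_comp_lineMap (by simpa using hf))
  simp only [slope_def_field, Function.comp_apply, lineMap_apply_zero, lineMap_apply_one] at h
  linarith

theorem ConvexOn.isMinOn_of_hasGradientAt_zero {x : F} (hconv : ConvexOn ℝ univ f)
    (hf : HasGradientAt f 0 x) : IsMinOn f univ x :=
  isMinOn_univ_iff.mpr fun y => by simpa using hconv.add_inner_le hf y

theorem le_add_inner_add_sq_of_lipschitz_gradient (hg : ∀ z, HasGradientAt f (g z) z)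
    (hlip : ∀ z w, ‖g z - g w‖ ≤ L * ‖z - w‖) (x y : F) :
    f y ≤ f x + inner ℝ (g x) (y - x) + L / 2 * ‖y - x‖ ^ 2 := by
  set v := y - x
  let h : ℝ → ℝ := fun t => f (lineMap x y t) - t * inner ℝ (g x) v - L / 2 * ‖v‖ ^ 2 * t ^ 2
  have hderiv : ∀ t, HasDerivAt h
      (inner ℝ (g (lineMap x y t)) v - inner ℝ (g x) v - L * ‖v‖ ^ 2 * t) t := by
    intro t
    have hline : HasDerivAt (f ∘ lineMap x y) (inner ℝ (g (lineMap x y t)) v) t :=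
      (hg _).hasDerivAt_comp_lineMap
    refine ((hline.sub ((hasDerivAt_id t).mul_const (inner ℝ (g x) v))).sub
      ((hasDerivAt_pow 2 t).const_mul (L / 2 * ‖v‖ ^ 2))).congr_deriv ?_
    norm_num
    ring
  have hderiv_nonpos : ∀ t ∈ interior (Ici (0 : ℝ)),
      inner ℝ (g (lineMap x y t)) v - inner ℝ (g x) v - L * ‖v‖ ^ 2 * t ≤ 0 := by
    intro t ht
    rw [interior_Ici] at ht
    refine sub_nonpos.mpr ?_
    calc inner ℝ (g (lineMap x y t)) v - inner ℝ (g x) v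
        = inner ℝ (g (lineMap x y t) - g x) v := (inner_sub_left _ _ _).symm
      _ ≤ ‖g (lineMap x y t) - g x‖ * ‖v‖ := real_inner_le_norm _ _
      _ ≤ L * ‖lineMap x y t - x‖ * ‖v‖ := by gcongr; exact hlip _ _
      _ = L * ‖v‖ ^ 2 * t := by
        rw [← dist_eq_norm, dist_lineMap_left, Real.norm_of_nonneg ht.le, dist_eq_norm', sq]; ring
  have hanti : AntitoneOn h (Ici 0) :=
    antitoneOn_of_hasDerivWithinAt_nonpos (convex_Ici 0)
      (fun t _ => (hderiv t).continuousAt.continuousWithinAt)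
      (fun t _ => (hderiv t).hasDerivWithinAt) hderiv_nonpos
  have hmono : h 1 ≤ h 0 := hanti (mem_Ici.mpr le_rfl) (mem_Ici.mpr zero_le_one) zero_le_one
  simp only [h, lineMap_apply_one, lineMap_apply_zero] at hmono
  linarith

theorem IsMinOn.sq_norm_gradient_le {x₀ : F} (hmin : IsMinOn f univ x₀) (hL : 0 < L)
    (hg : ∀ z, HasGradientAt f (g z) z) (hlip : ∀ z w, ‖g z - g w‖ ≤ L * ‖z - w‖) (z : F) :
    ‖g z‖ ^ 2 ≤ 2 * L * (f z - f x₀) := by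
  -- a gradient step of length `1 / L` from `z` decreases `f` by at least `‖g z‖ ^ 2 / (2 * L)`
  have hstep : z - L⁻¹ • g z - z = (-L⁻¹) • g z := by module
  have hdescent := le_add_inner_add_sq_of_lipschitz_gradient hg hlip z (z - L⁻¹ • g z)
  rw [hstep, real_inner_smul_right, real_inner_self_eq_norm_sq, norm_smul, mul_pow,
    norm_neg, norm_inv, Real.norm_of_nonneg hL.le] at hdescent
  have hdecrease : -L⁻¹ * ‖g z‖ ^ 2 + L / 2 * (L⁻¹ ^ 2 * ‖g z‖ ^ 2) = -(‖g z‖ ^ 2 / (2 * L)) := by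
    field_simp
    ring
  have hbelow := isMinOn_univ_iff.mp hmin (z - L⁻¹ • g z)
  rw [← div_le_iff₀' (by positivity)]
  linarith

theorem IsMinOn.sub_le_one_add_mul {x₀ : F} {γ : ℝ} (hmin : IsMinOn f univ x₀) (hγ : 0 < γ)
    (hL : 0 < L) (hg : ∀ z, HasGradientAt f (g z) z)
    (hlip : ∀ z w, ‖g z - g w‖ ≤ L * ‖z - w‖) (x z : F) :
    f x - f x₀ ≤ (1 + γ * L) * (f z - f x₀ + 1 / (2 * γ) * ‖z - x‖ ^ 2) := by
  have hdescent := le_add_inner_add_sq_of_lipschitz_gradient hg hlip z x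
  have hcs : inner ℝ (g z) (x - z) ≤ ‖g z‖ * ‖z - x‖ :=
    (real_inner_le_norm _ _).trans_eq (by rw [norm_sub_rev])
  rw [norm_sub_rev] at hdescent
  have hamgm : ‖g z‖ * ‖z - x‖ ≤ γ / 2 * ‖g z‖ ^ 2 + 1 / (2 * γ) * ‖z - x‖ ^ 2 := by
    rw [← sub_nonneg]
    have hsq : γ / 2 * ‖g z‖ ^ 2 + 1 / (2 * γ) * ‖z - x‖ ^ 2 - ‖g z‖ * ‖z - x‖
        = (γ * ‖g z‖ - ‖z - x‖) ^ 2 / (2 * γ) := by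
      field_simp
      ring
    rw [hsq]
    positivity
  have hgrad : γ / 2 * ‖g z‖ ^ 2 ≤ γ * L * (f z - f x₀) := by
    nlinarith [hmin.sq_norm_gradient_le hL hg hlip z]
  have hquad : L / 2 * ‖z - x‖ ^ 2 = γ * L * (1 / (2 * γ) * ‖z - x‖ ^ 2) := by
    field_simp
  linarith

end Smooth

theorem moreau_eq_of_isMinOn {d : ℕ} {γ : ℝ} {f : EuclideanSpace ℝ (Fin d) → ℝ}
    {x : EuclideanSpace ℝ (Fin d)} (hγ : 0 ≤ γ) (hmin : IsMinOn f univ x) :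
    moreau γ f x = f x := by
  have hle : ∀ z, f x ≤ f z + 1 / (2 * γ) * ‖z - x‖ ^ 2 := fun z => by
    have hmin_z := isMinOn_univ_iff.mp hmin z
    have : 0 ≤ 1 / (2 * γ) * ‖z - x‖ ^ 2 := by positivity
    linarith
  refine le_antisymm ((ciInf_le ⟨f x, ?_⟩ x).trans_eq (by simp)) (le_ciInf hle)
  rintro _ ⟨z, rfl⟩
  exact hle z

/-- Let each `fᵢ : ℝ^d → ℝ` be differentiable, convex and `Lᵢ`-smooth, assume the
interpolation regime holds with common minimizer `x⋆` (`∇fᵢ(x⋆) = 0` for all `i`), and let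
`γ > 0`. Then for each `i` and all `x`:
`M_{fᵢ}^γ(x) − M_{fᵢ}^γ(x⋆) ≥ (1/(1+γLᵢ)) (fᵢ(x) − fᵢ(x⋆))`. -/
theorem stmt10 {d n : ℕ} (γ : ℝ) (hγ : 0 < γ)
    (f : Fin n → EuclideanSpace ℝ (Fin d) → ℝ)
    (g : Fin n → EuclideanSpace ℝ (Fin d) → EuclideanSpace ℝ (Fin d))
    (L : Fin n → ℝ) (hL : ∀ i, 0 < L i)
    (hconv : ∀ i, ConvexOn ℝ Set.univ (f i))
    (hgrad : ∀ i x, HasGradientAt (f i) (g i x) x)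
    (hlip : ∀ i x y, ‖g i x - g i y‖ ≤ L i * ‖x - y‖)
    (xs : EuclideanSpace ℝ (Fin d)) (hint : ∀ i, g i xs = 0) :
    ∀ i, ∀ x, moreau γ (f i) x - moreau γ (f i) xs ≥
      (1 / (1 + γ * L i)) * (f i x - f i xs) := by
  intro i x
  have hmin : IsMinOn (f i) univ xs :=
    (hconv i).isMinOn_of_hasGradientAt_zero (hint i ▸ hgrad i xs)
  have hscale : 0 < 1 + γ * L i := by have := hL i; positivity
  rw [moreau_eq_of_isMinOn hγ.le hmin, ge_iff_le, le_sub_iff_add_le', one_div_mul_eq_div]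
  refine le_ciInf fun z => ?_
  have hz := (div_le_iff₀' hscale).mpr (hmin.sub_le_one_add_mul hγ (hL i) (hgrad i) (hlip i) x z)
  linarith
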